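/- arXiv:1506.04459 — 3 statements merged into one kernel-verified Lean document; each statement's English description precedes it below -/
import Mathlib

section
/- Let D be a primitive digraph of order n ≥ 3. Then exp(D) = (n−1)² + 1 if and only if D is isomorphic to D_1, where D_1 consists of the standard n-cycle 𝒞 (arcs v_{i+1} → v_i for 1 ≤ i ≤ n−1 together with the arc v_1 → v_n) plus the extra arc v_1 → v_{n−1}. -/
variable {V : Type*}

/-- There is a directed walk of length `k` from `u` to `v` in the digraph `D`. -/
def HasWalk (D : V → V → Prop) : ℕ → V → V → Prop
  | 0, u, v => u = v
  | k + 1, u, v => ∃ w, D u w ∧ HasWalk D k w v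

/-- A digraph is primitive if there is `k ≥ 1` such that every ordered pair of
vertices is joined by a walk of length exactly `k`. -/
def IsPrimitive (D : V → V → Prop) : Prop :=
  ∃ k, 1 ≤ k ∧ ∀ u v, HasWalk D k u v

/-- The exponent of a primitive digraph: the least `k ≥ 1` such that every ordered
pair of vertices is joined by a walk of length exactly `k`. -/
noncomputable def expnt (D : V → V → Prop) : ℕ :=
  sInf {k | 1 ≤ k ∧ ∀ u v, HasWalk D k u v}

/-- `D` has a (directed) cycle of length `ℓ`: a closed walk `f 0, f 1, …, f (ℓ-1), f 0`
whose vertices `f 0, …, f (ℓ-1)` are pairwise distinct. -/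
def HasCycleOfLength (D : V → V → Prop) (ℓ : ℕ) : Prop :=
  0 < ℓ ∧ ∃ f : ℕ → V,
    (∀ i < ℓ, ∀ j < ℓ, f i = f j → i = j) ∧
    (∀ i, i + 1 < ℓ → D (f i) (f (i + 1))) ∧
    D (f (ℓ - 1)) (f 0)

/-- The set of cycle lengths of `D`, usually denoted `C(D)`. -/
def cycleLengths (D : V → V → Prop) : Set ℕ := {ℓ | HasCycleOfLength D ℓ}

/-- The girth of `D`: the length of its shortest cycle. -/
noncomputable def girth (D : V → V → Prop) : ℕ := sInf (cycleLengths D)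

/-- `D` is isomorphic to `E`. -/
def DigraphIso {W : Type*} (D : V → V → Prop) (E : W → W → Prop) : Prop :=
  ∃ e : V ≃ W, ∀ u v, D u v ↔ E (e u) (e v)

/-- The standard `n`-cycle `𝒞 = (v_n, v_{n-1}, …, v_2, v_1, v_n)` on `Fin n`
(vertex `v_i` is index `i - 1`): arcs `v_{i+1} → v_i` for `1 ≤ i ≤ n - 1`
together with the arc `v_1 → v_n`. -/
def stdCycleRev (n : ℕ) : Fin n → Fin n → Prop :=
  fun a b => (a : ℕ) = (b : ℕ) + 1 ∨ ((a : ℕ) = 0 ∧ (b : ℕ) = n - 1)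

/-- `D_1`: the standard `n`-cycle plus the extra arc `v_1 → v_{n-1}`. -/
def D1 (n : ℕ) : Fin n → Fin n → Prop :=
  fun a b => stdCycleRev n a b ∨ ((a : ℕ) = 0 ∧ (b : ℕ) = n - 2)

/-- `D_2`: `D_1` plus the extra arc `v_2 → v_n`. -/
def D2 (n : ℕ) : Fin n → Fin n → Prop :=
  fun a b => D1 n a b ∨ ((a : ℕ) = 1 ∧ (b : ℕ) = n - 1)

/-!
Let `s` be the least length of a closed walk in `D`; such a closed walk is a chordless cycle.
Iterating "vertices reachable in one more step" gives a chain of vertex sets that gains a vertex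
at every step until it is stable, so every vertex reaches the cycle in exactly `n - s` steps,
and a vertex on a closed walk of length `s` reaches every vertex in exactly `k` steps for all
`k ≥ (n - 1) s`. Hence `exp D ≤ n - s + (n - 1) s` (Dulmage–Mendelsohn), which forces
`s ≥ n - 1`. If `s = n`, the chordless Hamiltonian cycle is all of `D`, whose arcs raise an
index in `ZMod n` by one, so `D` is not primitive. So `s = n - 1`, and the remaining vertex `x`
lies on no closed walk of length `n - 1`: otherwise every vertex would, and `exp D ≤ (n - 1)²`.
Hence every in-neighbour of `x` immediately precedes every out-neighbour of `x` on the cycle,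
which pins `D` down as `D_1`.

Conversely, the closed walks at `v_1` in `D_1` have exactly the lengths in the numerical
semigroup generated by `n - 1` and `n`, whose Frobenius number `(n - 1)(n - 2) - 1` rules out a
walk of length `(n - 1)²` from `v_n` to itself.
-/

open Finset

section Walks

variable {W : Type*} {D : V → V → Prop}

namespace HasWalk

theorem single {u v : V} (h : D u v) : HasWalk D 1 u v := ⟨v, h, rfl⟩

theorem append {j k : ℕ} {u w v : V} (h₁ : HasWalk D j u w) (h₂ : HasWalk D k w v) :
    HasWalk D (j + k) u v := by
  induction j generalizing u with
  | zero => cases h₁; simpa using h₂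
  | succ j ih =>
    obtain ⟨z, hz, h₁⟩ := h₁
    rw [Nat.add_right_comm]
    exact ⟨z, hz, ih h₁⟩

theorem exists_of_add {j k : ℕ} {u v : V} (h : HasWalk D (j + k) u v) :
    ∃ w, HasWalk D j u w ∧ HasWalk D k w v := by
  induction j generalizing u with
  | zero => exact ⟨u, rfl, by simpa using h⟩
  | succ j ih =>
    rw [Nat.add_right_comm] at h
    obtain ⟨z, hz, h⟩ := h
    obtain ⟨w, h₁, h₂⟩ := ih h
    exact ⟨w, ⟨z, hz, h₁⟩, h₂⟩

theorem map {E : W → W → Prop} (F : V → W) (hF : ∀ a b, D a b → E (F a) (F b)) {k : ℕ}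
    {u v : V} (h : HasWalk D k u v) : HasWalk E k (F u) (F v) := by
  induction k generalizing u with
  | zero => exact congrArg F h
  | succ k ih =>
    obtain ⟨w, hw, h⟩ := h
    exact ⟨F w, hF _ _ hw, ih h⟩

theorem exists_fun {k : ℕ} {u v : V} (h : HasWalk D k u v) :
    ∃ g : ℕ → V, g 0 = u ∧ g k = v ∧ ∀ i < k, D (g i) (g (i + 1)) := by
  induction k generalizing u with
  | zero => exact ⟨fun _ => u, rfl, h, by omega⟩
  | succ k ih =>
    obtain ⟨w, hw, h⟩ := h
    obtain ⟨g, hg₀, hgk, hg⟩ := ih h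
    refine ⟨fun i => if i = 0 then u else g (i - 1), by simp, by simp [hgk], ?_⟩
    rintro (_ | i) hi
    · simpa [hg₀] using hw
    · simpa using hg i (by omega)

theorem apply_eq_add {G : Type*} [AddCommMonoidWithOne G] (φ : V → G)
    (hφ : ∀ a b, D a b → φ b = φ a + 1) {k : ℕ} {u v : V} (h : HasWalk D k u v) :
    φ v = φ u + k := by
  induction k generalizing u with
  | zero => cases h; simp
  | succ k ih =>
    obtain ⟨w, hw, h⟩ := h
    rw [ih h, hφ _ _ hw]
    push_cast
    abel

end HasWalk

theorem expnt_le {k : ℕ} (hk : 1 ≤ k) (h : ∀ u v, HasWalk D k u v) : expnt D ≤ k :=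
  Nat.sInf_le ⟨hk, h⟩

namespace IsPrimitive

theorem exists_adj_out (hD : IsPrimitive D) (u : V) : ∃ w, D u w := by
  obtain ⟨k, hk, h⟩ := hD
  obtain ⟨k, rfl⟩ : ∃ j, k = j + 1 := ⟨k - 1, by omega⟩
  obtain ⟨w, hw, -⟩ := h u u
  exact ⟨w, hw⟩

theorem exists_adj_in (hD : IsPrimitive D) (v : V) : ∃ w, D w v := by
  obtain ⟨k, hk, h⟩ := hD
  obtain ⟨k, rfl⟩ : ∃ j, k = j + 1 := ⟨k - 1, by omega⟩
  obtain ⟨w, -, v', hv', rfl⟩ := (h v v).exists_of_add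
  exact ⟨w, hv'⟩

theorem hasWalk_of_le (hD : IsPrimitive D) {K k : ℕ} (hK : ∀ u v, HasWalk D K u v)
    (hKk : K ≤ k) : ∀ u v, HasWalk D k u v := by
  induction k, hKk using Nat.le_induction with
  | base => exact hK
  | succ k _ ih =>
    intro u v
    obtain ⟨w, hw⟩ := hD.exists_adj_out u
    exact ⟨w, hw, ih w v⟩

theorem hasWalk_of_expnt_le (hD : IsPrimitive D) {k : ℕ} (hk : expnt D ≤ k) :
    ∀ u v, HasWalk D k u v :=
  hD.hasWalk_of_le (Nat.sInf_mem hD).2 hk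

theorem apply_eq_of_grading {G : Type*} [AddCommMonoidWithOne G] (hD : IsPrimitive D)
    (φ : V → G) (hφ : ∀ a b, D a b → φ b = φ a + 1) (u v : V) : φ u = φ v := by
  obtain ⟨k, -, h⟩ := hD
  rw [(h u v).apply_eq_add φ hφ, ← (h u u).apply_eq_add φ hφ]

end IsPrimitive

theorem DigraphIso.hasWalk_iff {E : W → W → Prop} {e : V ≃ W}
    (he : ∀ u v, D u v ↔ E (e u) (e v)) {k : ℕ} {u v : V} :
    HasWalk D k u v ↔ HasWalk E k (e u) (e v) := by
  refine ⟨HasWalk.map e fun a b => (he a b).1, fun h => ?_⟩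
  simpa using h.map e.symm fun a b hab => (he _ _).2 (by simpa using hab)

theorem DigraphIso.expnt_eq {E : W → W → Prop} (h : DigraphIso D E) : expnt D = expnt E := by
  obtain ⟨e, he⟩ := h
  unfold expnt
  congr 1
  ext k
  refine and_congr_right fun _ => ⟨fun h u v => ?_, fun h u v => (hasWalk_iff he).2 (h _ _)⟩
  simpa using (hasWalk_iff he).1 (h (e.symm u) (e.symm v))

theorem digraphIso_of_equiv {E : W → W → Prop} (F : W ≃ V)
    (h : ∀ a b, D (F a) (F b) ↔ E a b) : DigraphIso D E :=
  ⟨F.symm, fun u v => by simpa using h (F.symm u) (F.symm v)⟩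

theorem iterate_eq_univ_of_card_le [Fintype V] {R : ℕ → Finset V} (T : Finset V → Finset V)
    (hmono : ∀ k, R k ⊆ R (k + 1)) (hstep : ∀ k, R (k + 1) = T (R k)) {K : ℕ}
    (hK : R K = univ) {k : ℕ} (hk : Fintype.card V ≤ #(R 0) + k) : R k = univ := by
  have hstable : ∀ j, R (j + 1) = R j → ∀ i, R (j + i) = R j := by
    intro j hj i
    induction i with
    | zero => rfl
    | succ i ih => rw [← Nat.add_assoc, hstep, ih, ← hstep, hj]
  have hgrow : ∀ k, R k = univ ∨ #(R 0) + k ≤ #(R k) := by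
    intro k
    induction k with
    | zero => exact Or.inr le_rfl
    | succ k ih =>
      by_cases heq : R (k + 1) = R k
      · refine Or.inl (eq_univ_of_forall fun v => ?_)
        rw [heq, ← hstable k heq K]
        exact monotone_nat_of_le_succ hmono (Nat.le_add_left K k) (hK ▸ mem_univ v)
      · rcases ih with h | h
        · exact Or.inl (eq_univ_of_forall fun v => hmono k (h ▸ mem_univ v))
        · have := card_lt_card ((hmono k).ssubset_of_ne (Ne.symm heq))
          exact Or.inr (by omega)
  rcases hgrow k with h | h
  · exact h
  · exact eq_univ_of_card _ (le_antisymm (card_le_univ _) (hk.trans h))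

namespace IsPrimitive

variable [Fintype V]

theorem hasWalk_of_closed_walk (hD : IsPrimitive D) {s : ℕ} (hs : 1 ≤ s) {c : V}
    (hc : HasWalk D s c c) {k : ℕ} (hk : (Fintype.card V - 1) * s ≤ k) (v : V) :
    HasWalk D k c v := by
  classical
  set R : ℕ → Finset V := fun j => univ.filter (HasWalk D (j * s) c)
  have hfull : R (Fintype.card V - 1) = univ := by
    refine iterate_eq_univ_of_card_le (fun S => univ.filter fun v => ∃ w ∈ S, HasWalk D s w v)
      (fun j v hv => ?_) (fun j => ?_) (K := expnt D) ?_ ?_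
    · simp only [R, mem_filter, mem_univ, true_and] at hv ⊢
      rw [Nat.succ_mul, Nat.add_comm]
      exact hc.append hv
    · ext v
      simp only [R, mem_filter, mem_univ, true_and, Nat.succ_mul]
      exact ⟨fun h => h.exists_of_add, fun ⟨w, h₁, h₂⟩ => h₁.append h₂⟩
    · exact eq_univ_of_forall fun v => by
        simpa [R] using hD.hasWalk_of_expnt_le (Nat.le_mul_of_pos_right _ hs) c v
    · have : c ∈ R 0 := by simp only [R, mem_filter, mem_univ, true_and, zero_mul]; rfl
      have := card_pos.2 ⟨c, this⟩
      omega
  induction k, hk using Nat.le_induction generalizing v with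
  | base =>
    have hv : v ∈ R _ := hfull ▸ mem_univ v
    simpa [R] using hv
  | succ k _ ih =>
    obtain ⟨w, hw⟩ := hD.exists_adj_in v
    exact (ih w).append (.single hw)

theorem exists_hasWalk_mem (hD : IsPrimitive D) {C : Finset V} (hne : C.Nonempty)
    (hC : ∀ w ∈ C, ∃ w' ∈ C, D w w') (u : V) :
    ∃ w ∈ C, HasWalk D (Fintype.card V - #C) u w := by
  classical
  set R : ℕ → Finset V := fun k => univ.filter fun u => ∃ w ∈ C, HasWalk D k u w
  have hfull : R (Fintype.card V - #C) = univ := by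
    refine iterate_eq_univ_of_card_le (fun S => univ.filter fun u => ∃ w ∈ S, D u w)
      (fun k u hu => ?_) (fun k => ?_) (K := expnt D) ?_ ?_
    · simp only [R, mem_filter, mem_univ, true_and] at hu ⊢
      obtain ⟨w, hw, h⟩ := hu
      obtain ⟨w', hw', hww'⟩ := hC w hw
      exact ⟨w', hw', h.append (.single hww')⟩
    · ext u
      simp only [R, mem_filter, mem_univ, true_and]
      exact ⟨fun ⟨w, hw, w', h₁, h₂⟩ => ⟨w', ⟨w, hw, h₂⟩, h₁⟩,
        fun ⟨w', ⟨w, hw, h₂⟩, h₁⟩ => ⟨w, hw, w', h₁, h₂⟩⟩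
    · obtain ⟨w, hw⟩ := hne
      exact eq_univ_of_forall fun u => by
        simpa [R] using ⟨w, hw, hD.hasWalk_of_expnt_le le_rfl u w⟩
    · have : C ⊆ R 0 := fun w hw => by
        simp only [R, mem_filter, mem_univ, true_and]
        exact ⟨w, hw, rfl⟩
      have := card_le_card this
      omega
  have hu : u ∈ R _ := hfull ▸ mem_univ u
  simpa [R] using hu

theorem hasWalk_of_forall_exists_closed (hD : IsPrimitive D) {r s : ℕ} (hs : 1 ≤ s)
    (h : ∀ u, ∃ w, HasWalk D r u w ∧ HasWalk D s w w) {k : ℕ}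
    (hk : r + (Fintype.card V - 1) * s ≤ k) (u v : V) : HasWalk D k u v := by
  obtain ⟨w, huw, hw⟩ := h u
  obtain ⟨j, rfl⟩ := Nat.exists_eq_add_of_le hk
  rw [Nat.add_assoc]
  exact huw.append (hD.hasWalk_of_closed_walk hs hw (Nat.le_add_right _ _) v)

end IsPrimitive

theorem ZMod.eq_neg_one_of_val_add_one_eq {m : ℕ} [NeZero m] {z : ZMod m} (h : z.val + 1 = m) :
    z = -1 := by
  have := congrArg (Nat.cast : ℕ → ZMod m) h
  rw [Nat.cast_add, Nat.cast_one, ZMod.natCast_self, ZMod.natCast_zmod_val] at this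
  exact eq_neg_of_add_eq_zero_left this

theorem ZMod.natCast_eq_natCast_add_one_iff {m a b : ℕ} (ha : a < m) (hb : b < m) :
    (a : ZMod m) = b + 1 ↔ a = b + 1 ∨ a = 0 ∧ b + 1 = m := by
  rw [← Nat.cast_succ, ZMod.natCast_eq_natCast_iff', Nat.mod_eq_of_lt ha]
  rcases (Nat.succ_le_of_lt hb).lt_or_eq with h | h
  · rw [Nat.mod_eq_of_lt h]
    omega
  · rw [h, Nat.mod_self]
    omega

section Cycle

variable {s : ℕ} {c : ZMod s → V}

theorem hasWalk_cycle (harc : ∀ z, D (c z) (c (z + 1))) (z : ZMod s) (d : ℕ) :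
    HasWalk D d (c z) (c (z + d)) := by
  induction d with
  | zero => show c z = c (z + ((0 : ℕ) : ZMod s)); simp
  | succ d ih =>
    rw [Nat.cast_succ, ← add_assoc]
    exact ih.append (.single (harc _))

theorem hasWalk_cycle_closed [NeZero s] (harc : ∀ z, D (c z) (c (z + 1))) (z : ZMod s) :
    HasWalk D s (c z) (c z) := by
  simpa using hasWalk_cycle harc z s

theorem hasWalk_through_cycle [NeZero s] (harc : ∀ z, D (c z) (c (z + 1))) {x : V}
    {i j : ZMod s} (hout : D x (c i)) (hin : D (c j) x) : HasWalk D ((j - i).val + 2) x x := by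
  have hw := hasWalk_cycle harc i (j - i).val
  rw [ZMod.natCast_zmod_val, add_sub_cancel] at hw
  have := ((HasWalk.single hout).append hw).append (.single hin)
  rwa [show 1 + (j - i).val + 1 = (j - i).val + 2 by omega] at this

theorem HasWalk.exists_cycle [NeZero s] {u : V} (h : HasWalk D s u u) :
    ∃ c : ZMod s → V, ∀ z, D (c z) (c (z + 1)) := by
  obtain ⟨g, hg₀, hgs, hg⟩ := h.exists_fun
  refine ⟨fun z => g z.val, fun z => ?_⟩
  have hz := ZMod.val_lt z
  by_cases hlt : z.val + 1 < s
  · have : (z + 1).val = z.val + 1 := by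
      rw [← ZMod.val_cast_of_lt hlt, Nat.cast_succ, ZMod.natCast_zmod_val]
    simpa [this] using hg z.val (by omega)
  · have hzv : z.val = s - 1 := by omega
    have hz1 : z + 1 = 0 := by
      rw [ZMod.eq_neg_one_of_val_add_one_eq (z := z) (by omega), neg_add_cancel]
    have := hg (s - 1) (by omega)
    rw [Nat.sub_add_cancel (by omega), hgs, ← hg₀] at this
    simpa [hz1, hzv] using this

variable (hg : ∀ t u, 1 ≤ t → HasWalk D t u u → s ≤ t) (harc : ∀ z, D (c z) (c (z + 1)))
include hg harc

theorem injective_of_girth [NeZero s] : Function.Injective c := by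
  intro z z' hzz'
  by_contra hne
  have hw := hasWalk_cycle harc z (z' - z).val
  rw [ZMod.natCast_zmod_val, add_sub_cancel, ← hzz'] at hw
  have := hg _ _ (ZMod.val_pos.2 (sub_ne_zero.2 (Ne.symm hne))) hw
  exact absurd (ZMod.val_lt (z' - z)) (not_lt.2 this)

theorem eq_add_one_of_adj_of_girth [NeZero s] {z z' : ZMod s} (h : D (c z) (c z')) :
    z' = z + 1 := by
  have hw := hasWalk_cycle harc z' (z - z').val
  rw [ZMod.natCast_zmod_val, add_sub_cancel] at hw
  have := hg _ _ (Nat.le_add_left 1 _) (hw.append (.single h))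
  have hz := ZMod.eq_neg_one_of_val_add_one_eq (z := z - z')
    (by have := ZMod.val_lt (z - z'); omega)
  linear_combination -hz

theorem IsPrimitive.ne_card_of_girth [Fintype V] [NeZero s] (hD : IsPrimitive D)
    (hinj : Function.Injective c) (hs : 2 ≤ s) : s ≠ Fintype.card V := by
  intro hcard
  let e := Equiv.ofBijective c ((Fintype.bijective_iff_injective_and_card c).2
    ⟨hinj, by rw [ZMod.card, hcard]⟩)
  have hgrading : ∀ a b, D a b → e.symm b = e.symm a + 1 := fun a b hab =>
    eq_add_one_of_adj_of_girth hg harc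
      (by rwa [← e.apply_symm_apply a, ← e.apply_symm_apply b] at hab)
  have h01 := hD.apply_eq_of_grading e.symm hgrading (e 0) (e 1)
  rw [e.symm_apply_apply, e.symm_apply_apply] at h01
  have h1 : ((1 : ℕ) : ZMod s) = 0 := by rw [Nat.cast_one, h01]
  have := Nat.le_of_dvd one_pos ((ZMod.natCast_eq_zero_iff 1 s).1 h1)
  omega

end Cycle

theorem IsPrimitive.hasWalk_of_cycle [Fintype V] (hD : IsPrimitive D) {s : ℕ} [NeZero s]
    {c : ZMod s → V} (hinj : Function.Injective c) (harc : ∀ z, D (c z) (c (z + 1))) :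
    ∀ u v, HasWalk D (Fintype.card V - s + (Fintype.card V - 1) * s) u v := by
  classical
  refine hD.hasWalk_of_forall_exists_closed NeZero.one_le (fun u => ?_) le_rfl
  obtain ⟨w, hw, huw⟩ := hD.exists_hasWalk_mem (C := univ.image c) (univ_nonempty.image c)
    (fun w hw => by
      obtain ⟨z, -, rfl⟩ := mem_image.1 hw
      exact ⟨c (z + 1), mem_image_of_mem _ (mem_univ _), harc z⟩) u
  rw [card_image_of_injective _ hinj, card_univ, ZMod.card] at huw
  obtain ⟨z, -, rfl⟩ := mem_image.1 hw
  exact ⟨c z, huw, hasWalk_cycle_closed harc z⟩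

theorem IsPrimitive.exists_minimal_closed_walk [Nonempty V] (hD : IsPrimitive D) :
    ∃ s u, 1 ≤ s ∧ HasWalk D s u u ∧ ∀ t w, 1 ≤ t → HasWalk D t w w → s ≤ t := by
  classical
  have hex : ∃ s, 1 ≤ s ∧ ∃ u, HasWalk D s u u := by
    obtain ⟨k, hk, h⟩ := hD
    obtain ⟨u⟩ := ‹Nonempty V›
    exact ⟨k, hk, u, h u u⟩
  obtain ⟨hs, u, hu⟩ := Nat.find_spec hex
  exact ⟨Nat.find hex, u, hs, hu, fun t w ht hw => Nat.find_min' hex ⟨ht, w, hw⟩⟩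

theorem exists_eq_or_mem_range_of_card_eq_succ [Fintype V] {α : Type*} [Fintype α] {f : α → V}
    (hf : Function.Injective f) (h : Fintype.card V = Fintype.card α + 1) :
    ∃ x, ∀ v, v = x ∨ ∃ a, f a = v := by
  classical
  obtain ⟨x, hx⟩ := card_eq_one.1 (show #(univ.image f)ᶜ = 1 by
    rw [card_compl, card_image_of_injective _ hf, card_univ, h]; omega)
  refine ⟨x, fun v => ?_⟩
  by_cases hv : v ∈ univ.image f
  · obtain ⟨a, -, rfl⟩ := mem_image.1 hv
    exact .inr ⟨a, rfl⟩
  · exact .inl (by simpa [hx] using mem_compl.2 hv)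

section D1

variable {m : ℕ}

theorem D1_add_one_iff {a b : Fin (m + 1)} :
    D1 (m + 1) a b ↔
      (a : ℕ) = b + 1 ∨ (a : ℕ) = 0 ∧ ((b : ℕ) = m ∨ (b : ℕ) + 1 = m) := by
  simp only [D1, stdCycleRev]
  omega

theorem D1_hasWalk_of_add_eq {a b : Fin (m + 1)} {k : ℕ} (h : (b : ℕ) + k = a) :
    HasWalk (D1 (m + 1)) k a b := by
  induction k generalizing a with
  | zero => exact Fin.ext (by omega)
  | succ k ih =>
    exact ⟨⟨a - 1, by omega⟩, D1_add_one_iff.2 (.inl (by dsimp only; omega)),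
      ih (by dsimp only; omega)⟩

theorem D1_hasWalk_zero_of_mem (hm : 1 ≤ m) {L : ℕ}
    (hL : L ∈ AddSubmonoid.closure ({m, m + 1} : Set ℕ)) : HasWalk (D1 (m + 1)) L 0 0 := by
  induction hL using AddSubmonoid.closure_induction with
  | mem L hL =>
    have hL : L = m ∨ L = m + 1 := hL
    let b : Fin (m + 1) := ⟨L - 1, by omega⟩
    have harc : D1 (m + 1) 0 b := D1_add_one_iff.2 (.inr ⟨rfl, by simp only [b]; omega⟩)
    have := (HasWalk.single harc).append (D1_hasWalk_of_add_eq (b := 0) (k := L - 1) (by simp [b]))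
    rwa [show 1 + (L - 1) = L by omega] at this
  | zero => rfl
  | add _ _ _ _ h₁ h₂ => exact h₁.append h₂

theorem D1_exists_mem_of_hasWalk_zero {k : ℕ} {a : Fin (m + 1)}
    (h : HasWalk (D1 (m + 1)) k a 0) :
    ∃ L ∈ AddSubmonoid.closure ({m, m + 1} : Set ℕ), k = a + L := by
  induction k generalizing a with
  | zero => exact ⟨0, zero_mem _, by simp [show a = 0 from h]⟩
  | succ k ih =>
    obtain ⟨w, hw, h⟩ := h
    obtain ⟨L, hL, rfl⟩ := ih h
    rcases D1_add_one_iff.1 hw with hw | ⟨ha, hw | hw⟩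
    · exact ⟨L, hL, by omega⟩
    · exact ⟨L + (m + 1), add_mem hL (AddSubmonoid.subset_closure (by simp)), by omega⟩
    · exact ⟨L + m, add_mem hL (AddSubmonoid.subset_closure (by simp)), by omega⟩

theorem frobeniusNumber_self_add_one (hm : 2 ≤ m) :
    FrobeniusNumber (m * (m + 1) - m - (m + 1)) {m, m + 1} :=
  frobeniusNumber_pair (Nat.coprime_self_add_right.2 (Nat.coprime_one_right m)) (by omega)
    (by omega)

theorem isPrimitive_D1 (hm : 2 ≤ m) : IsPrimitive (D1 (m + 1)) := by
  have hmem := (frobeniusNumber_iff.1 (frobeniusNumber_self_add_one hm)).2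
  have hsq : 2 * m + 1 ≤ m * (m + 1) := by nlinarith
  refine ⟨m * (m + 1) + m, by omega, fun a b => ?_⟩
  have := a.isLt
  have := b.isLt
  -- `a → 0`, a closed walk at `0` longer than the Frobenius number, then `0 → m → b`
  have hL := D1_hasWalk_zero_of_mem (by omega) (hmem (m * (m + 1) + m - a - 1 - (m - b)) (by omega))
  have hwalk := (((D1_hasWalk_of_add_eq (a := a) (b := 0) (k := a) (by simp)).append hL).append
    (.single (D1_add_one_iff.2 (.inr ⟨rfl, .inl rfl⟩) : D1 (m + 1) 0 (Fin.last m)))).append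
    (D1_hasWalk_of_add_eq (a := Fin.last m) (b := b) (k := m - b)
      (by rw [Fin.val_last]; omega))
  convert hwalk using 1
  omega

theorem D1_hasWalk_sq_add_one (hm : 2 ≤ m) : ∀ u v, HasWalk (D1 (m + 1)) (m ^ 2 + 1) u v := by
  refine (isPrimitive_D1 hm).hasWalk_of_forall_exists_closed (r := 1) (s := m) (by omega)
    (fun u => ?_) (by simp only [Fintype.card_fin, Nat.add_sub_cancel, sq]; omega)
  -- each vertex has an out-neighbour `w < m`, and each such `w` lies on the `m`-cycle through `0`
  obtain ⟨w, hw, huw⟩ : ∃ w : Fin (m + 1), (w : ℕ) < m ∧ D1 (m + 1) u w := by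
    rcases Nat.eq_zero_or_pos u with h | h
    · exact ⟨⟨m - 1, by omega⟩, by dsimp only; omega,
        D1_add_one_iff.2 (.inr ⟨h, .inr (by dsimp only; omega)⟩)⟩
    · exact ⟨⟨u - 1, by omega⟩, by dsimp only; omega,
        D1_add_one_iff.2 (.inl (by dsimp only; omega))⟩
  refine ⟨w, .single huw, ?_⟩
  have hwalk := ((D1_hasWalk_of_add_eq (a := w) (b := 0) (k := w) (by simp)).append
    (.single (D1_add_one_iff.2 (.inr ⟨rfl, .inr (by dsimp only; omega)⟩) :
      D1 (m + 1) 0 ⟨m - 1, by omega⟩))).append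
    (D1_hasWalk_of_add_eq (a := ⟨m - 1, by omega⟩) (b := w) (k := m - 1 - w)
      (by dsimp only; omega))
  convert hwalk using 1
  omega

theorem D1_not_hasWalk_sq (hm : 2 ≤ m) :
    ¬ HasWalk (D1 (m + 1)) (m ^ 2) (Fin.last m) (Fin.last m) := by
  intro h
  have hsq : m * (m + 1) = m ^ 2 + m := by ring
  obtain ⟨k, hk⟩ : ∃ k, m ^ 2 = k + 1 :=
    ⟨m ^ 2 - 1, (Nat.sub_add_cancel (Nat.one_le_pow _ _ (by omega))).symm⟩
  rw [hk] at h
  obtain ⟨w, h, _, hw, rfl⟩ := h.exists_of_add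
  -- the only arc into `m` comes from `0`
  have hw₀ := D1_add_one_iff.1 hw
  rw [Fin.val_last] at hw₀
  obtain rfl : w = 0 := Fin.ext (by rw [Fin.val_zero]; omega)
  obtain ⟨L, hL, hkL⟩ := D1_exists_mem_of_hasWalk_zero h
  apply (frobeniusNumber_iff.1 (frobeniusNumber_self_add_one hm)).1
  convert hL using 1
  rw [Fin.val_last] at hkL
  omega

theorem expnt_D1 (hm : 2 ≤ m) : expnt (D1 (m + 1)) = m ^ 2 + 1 :=
  le_antisymm (expnt_le (by omega) (D1_hasWalk_sq_add_one hm)) <| Nat.succ_le_of_lt <|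
    lt_of_not_ge fun h => D1_not_hasWalk_sq hm ((isPrimitive_D1 hm).hasWalk_of_expnt_le h _ _)

end D1

theorem digraphIso_D1_of_adj_iff [Fintype V] {m : ℕ} [NeZero m] (hV : Fintype.card V = m + 1)
    (c : ZMod m → V) (x : V) (i₀ : ZMod m) (hcov : ∀ v, v = x ∨ ∃ z, c z = v)
    (hcc : ∀ z z', D (c z) (c z') ↔ z' = z + 1) (hcx : ∀ z, D (c z) x ↔ z = i₀ - 1)
    (hxc : ∀ z, D x (c z) ↔ z = i₀) (hxx : ¬ D x x) : DigraphIso D (D1 (m + 1)) := by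
  set F : Fin (m + 1) → V := fun a => if (a : ℕ) = m then x else c (i₀ - 1 - (a : ℕ))
  have hFx : ∀ a : Fin (m + 1), (a : ℕ) = m → F a = x := fun a ha => if_pos ha
  have hFc : ∀ a : Fin (m + 1), (a : ℕ) < m → F a = c (i₀ - 1 - (a : ℕ)) :=
    fun a ha => if_neg ha.ne
  have hsurj : Function.Surjective F := by
    intro v
    rcases hcov v with rfl | ⟨z, rfl⟩
    · exact ⟨Fin.last m, hFx _ rfl⟩
    · have := ZMod.val_lt (i₀ - 1 - z)
      refine ⟨⟨(i₀ - 1 - z).val, by omega⟩, ?_⟩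
      rw [hFc _ this, ZMod.natCast_zmod_val, sub_sub_cancel]
  have hbij := (Fintype.bijective_iff_surjective_and_card F).2 ⟨hsurj, by simp [hV]⟩
  refine digraphIso_of_equiv (Equiv.ofBijective F hbij) fun a b => ?_
  simp only [Equiv.ofBijective_apply, D1_add_one_iff]
  have hm := NeZero.ne m
  have ha := a.isLt
  have hb := b.isLt
  rcases (Nat.lt_succ_iff.1 ha).lt_or_eq with ha | ha <;>
    rcases (Nat.lt_succ_iff.1 hb).lt_or_eq with hb | hb
  · rw [hFc a ha, hFc b hb, hcc, show i₀ - 1 - (b : ℕ) = i₀ - 1 - (a : ℕ) + 1 ↔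
        ((a : ℕ) : ZMod m) = (b : ℕ) + 1 from ⟨fun h => by linear_combination h,
        fun h => by linear_combination h⟩, ZMod.natCast_eq_natCast_add_one_iff ha hb]
    omega
  · rw [hFc a ha, hFx b hb, hcx,
      show i₀ - 1 - (a : ℕ) = i₀ - 1 ↔ ((a : ℕ) : ZMod m) = 0 from
        ⟨fun h => by linear_combination -h, fun h => by linear_combination -h⟩,
      ZMod.natCast_eq_zero_iff]
    refine ⟨fun h => .inr ⟨Nat.eq_zero_of_dvd_of_lt h ha, .inl hb⟩, ?_⟩
    rintro (h | ⟨h, -⟩)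
    · omega
    · rw [h]
      exact dvd_zero m
  · rw [hFx a ha, hFc b hb, hxc,
      show i₀ - 1 - (b : ℕ) = i₀ ↔ ((0 : ℕ) : ZMod m) = (b : ℕ) + 1 from
        ⟨fun h => by linear_combination h, fun h => by linear_combination h⟩,
      ZMod.natCast_eq_natCast_add_one_iff (Nat.pos_of_ne_zero hm) hb]
    omega
  · rw [hFx a ha, hFx b hb]
    simp only [hxx, false_iff]
    omega

theorem digraphIso_D1_of_cycle [Fintype V] {m : ℕ} [NeZero m] (hV : Fintype.card V = m + 1)
    (hm : 2 ≤ m) (hD : IsPrimitive D) (hg : ∀ t u, 1 ≤ t → HasWalk D t u u → m ≤ t)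
    {c : ZMod m → V} (hinj : Function.Injective c) (harc : ∀ z, D (c z) (c (z + 1)))
    (hshort : ¬ ∀ u v, HasWalk D (m ^ 2) u v) : DigraphIso D (D1 (m + 1)) := by
  obtain ⟨x, hcov⟩ := exists_eq_or_mem_range_of_card_eq_succ hinj (by rw [hV, ZMod.card])
  have hxx : ¬ D x x := fun h => by have := hg 1 x le_rfl (.single h); omega
  -- if `x` lay on a closed walk of length `m`, every vertex would, and then `exp D ≤ m ^ 2`
  have hpair : ∀ i j, D x (c i) → D (c j) x → j = i - 1 := by
    intro i j hout hin
    have hw := hasWalk_through_cycle harc hout hin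
    have hge := hg ((j - i).val + 2) x (by omega) hw
    have hne : (j - i).val + 2 ≠ m := by
      intro heq
      refine hshort (hD.hasWalk_of_forall_exists_closed (r := 0) (s := m) (by omega) (fun u => ?_)
        (by rw [hV]; simp [sq]))
      rcases hcov u with rfl | ⟨z, rfl⟩
      · exact ⟨_, rfl, heq ▸ hw⟩
      · exact ⟨_, rfl, hasWalk_cycle_closed harc z⟩
    have := ZMod.eq_neg_one_of_val_add_one_eq (z := j - i) (by have := ZMod.val_lt (j - i); omega)
    linear_combination this
  have hnbr : ∀ w, D x w ∨ D w x → ∃ z, c z = w := fun w hw =>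
    (hcov w).resolve_left (by rintro rfl; exact hxx (hw.elim id id))
  obtain ⟨i₀, hout⟩ : ∃ i₀, D x (c i₀) := by
    obtain ⟨w, hw⟩ := hD.exists_adj_out x
    obtain ⟨z, rfl⟩ := hnbr w (.inl hw)
    exact ⟨z, hw⟩
  obtain ⟨j₀, hin⟩ : ∃ j₀, D (c j₀) x := by
    obtain ⟨w, hw⟩ := hD.exists_adj_in x
    obtain ⟨z, rfl⟩ := hnbr w (.inr hw)
    exact ⟨z, hw⟩
  have hj₀ := hpair i₀ j₀ hout hin
  refine digraphIso_D1_of_adj_iff hV c x i₀ hcov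
    (fun z z' => ⟨eq_add_one_of_adj_of_girth hg harc, by rintro rfl; exact harc z⟩)
    (fun z => ⟨hpair i₀ z hout, by rintro rfl; rwa [← hj₀]⟩)
    (fun z => ⟨fun h => ?_, by rintro rfl; exact hout⟩) hxx
  have := hpair z j₀ h hin
  linear_combination hj₀ - this

theorem digraphIso_D1_of_expnt_eq [Fintype V] {m : ℕ} (hV : Fintype.card V = m + 1)
    (hm : 2 ≤ m) (hD : IsPrimitive D) (hexp : expnt D = m ^ 2 + 1) :
    DigraphIso D (D1 (m + 1)) := by
  have : Nonempty V := Fintype.card_pos_iff.1 (by omega)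
  have hlong : ∀ k, 1 ≤ k → (∀ u v, HasWalk D k u v) → m ^ 2 + 1 ≤ k :=
    fun k hk h => hexp ▸ expnt_le hk h
  obtain ⟨s, u, hs, hu, hg⟩ := hD.exists_minimal_closed_walk
  have : NeZero s := ⟨by omega⟩
  obtain ⟨c, harc⟩ := hu.exists_cycle
  have hinj := injective_of_girth hg harc
  have hsV : s ≤ m + 1 := by simpa [hV] using Fintype.card_le_of_injective c hinj
  have hms : m ≤ s := by
    by_contra! hsm
    have := hlong _ (by rw [hV]; have := Nat.mul_pos (by omega : 0 < m + 1 - 1) hs; omega)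
      (hD.hasWalk_of_cycle hinj harc)
    rw [hV, Nat.add_sub_cancel] at this
    obtain ⟨t, rfl⟩ := Nat.exists_eq_add_of_lt hsm
    rw [show s + t + 1 + 1 - s = t + 2 by omega] at this
    nlinarith
  obtain rfl : s = m := by
    have := hD.ne_card_of_girth hg harc hinj (by omega)
    omega
  exact digraphIso_D1_of_cycle hV hm hD hg hinj harc fun h => by
    have := hlong _ (Nat.one_le_pow _ _ (by omega)) h
    omega

end Walks

/-- for a primitive digraph of order `n ≥ 3`,
`exp(D) = (n-1)² + 1` iff `D ≅ D_1`. -/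
theorem stmt2 {V : Type*} [Fintype V] (n : ℕ) (hn : Fintype.card V = n) (h3 : 3 ≤ n)
    (D : V → V → Prop) (hD : IsPrimitive D) :
    expnt D = (n - 1) ^ 2 + 1 ↔ DigraphIso D (D1 n) := by
  obtain ⟨m, rfl⟩ : ∃ m, n = m + 1 := ⟨n - 1, by omega⟩
  rw [Nat.add_sub_cancel]
  exact ⟨digraphIso_D1_of_expnt_eq hn (by omega) hD,
    fun h => h.expnt_eq.trans (expnt_D1 (by omega))⟩
end

section
/- Let D be a primitive digraph of order n ≥ 6 whose set of cycle lengths is exactly {g, q}, where 1 ≤ g < q ≤ n − 1. Then exp(D) ≤ 2n − 2 + (g − 1)(n − 3). -/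
variable {V : Type*}

/-! Every vertex `u` of a primitive digraph lies on a cycle, of length `c ∈ {g, q}` say; let `c'`
be the other length. A shortest walk from `u` to a `c'`-cycle has length at most `n - c' ≤ n - g`,
and a shortest walk from there to `v` has length at most `n - 1`. Winding round the two cycles
lengthens this walk by any `a c + b c'`; since the cycle lengths of a primitive digraph are coprime,
these combinations include every number `≥ (g - 1)(q - 1)` (Chicken McNugget). As `q ≤ n - 1`,
`(g - 1)(q - 1) + (n - g) + (n - 1) ≤ 2n - 2 + (g - 1)(n - 3)`. -/

section

variable {D : V → V → Prop}

theorem HasWalk.single_s7 {u v : V} (h : D u v) : HasWalk D 1 u v := ⟨v, h, rfl⟩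

theorem HasWalk.trans {k l : ℕ} {u w v : V} (h₁ : HasWalk D k u w) (h₂ : HasWalk D l w v) :
    HasWalk D (k + l) u v := by
  induction k generalizing u with
  | zero => cases h₁; simpa using h₂
  | succ k ih =>
    obtain ⟨x, hux, hx⟩ := h₁
    rw [Nat.add_right_comm]
    exact ⟨x, hux, ih hx⟩

theorem HasWalk.iterate {c : ℕ} {u : V} (h : HasWalk D c u u) (a : ℕ) :
    HasWalk D (a * c) u u := by
  induction a with
  | zero => rw [Nat.zero_mul]; exact (rfl : u = u)
  | succ a ih => simpa [Nat.succ_mul] using ih.trans h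

theorem hasWalk_iff_exists_fun {k : ℕ} {u v : V} :
    HasWalk D k u v ↔
      ∃ f : ℕ → V, f 0 = u ∧ f k = v ∧ ∀ i < k, D (f i) (f (i + 1)) := by
  induction k generalizing u with
  | zero =>
    exact ⟨fun h => ⟨fun _ => u, rfl, h, by simp⟩, fun ⟨f, h0, hk, _⟩ => h0 ▸ hk⟩
  | succ k ih =>
    constructor
    · rintro ⟨w, huw, hw⟩
      obtain ⟨f, hf0, hfk, hf⟩ := ih.mp hw
      refine ⟨fun | 0 => u | i + 1 => f i, rfl, hfk, ?_⟩
      rintro (_ | i) hi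
      · simpa [hf0] using huw
      · exact hf i (by omega)
    · rintro ⟨f, rfl, hfk, hf⟩
      exact ⟨f 1, hf 0 (by omega),
        ih.mpr ⟨fun i => f (i + 1), rfl, hfk, fun i hi => hf _ (by omega)⟩⟩

theorem hasWalk_of_chain {k i j : ℕ} (f : ℕ → V) (hf : ∀ t < k, D (f t) (f (t + 1)))
    (hij : i ≤ j) (hjk : j ≤ k) : HasWalk D (j - i) (f i) (f j) :=
  hasWalk_iff_exists_fun.mpr ⟨fun t => f (i + t), rfl, by simp only [Nat.add_sub_cancel' hij],
    fun t ht => hf _ (by omega)⟩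

theorem exists_lt_of_not_injOn {f : ℕ → V} {k : ℕ}
    (h : ¬ ∀ i < k, ∀ j < k, f i = f j → i = j) :
    ∃ a b, a < b ∧ b < k ∧ f a = f b := by
  push Not at h
  obtain ⟨i, hi, j, hj, he, hne⟩ := h
  rcases hne.lt_or_gt with h | h
  exacts [⟨i, j, h, hj, he⟩, ⟨j, i, h, hi, he.symm⟩]

theorem HasWalk.mem_cycleLengths_or_split {k : ℕ} {u : V} (h : HasWalk D k u u) (hk : 0 < k) :
    k ∈ cycleLengths D ∨
      ∃ i j w, 0 < i ∧ 0 < j ∧ i + j = k ∧ HasWalk D i u u ∧ HasWalk D j w w := by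
  obtain ⟨f, hf0, hfk, hf⟩ := hasWalk_iff_exists_fun.mp h
  by_cases hinj : ∀ i < k, ∀ j < k, f i = f j → i = j
  · left
    have hlast := hf (k - 1) (by omega)
    rw [Nat.sub_add_cancel hk, hfk, ← hf0] at hlast
    exact ⟨hk, f, hinj, fun i hi => hf i (by omega), hlast⟩
  · right
    obtain ⟨a, b, hab, hbk, heq⟩ := exists_lt_of_not_injOn hinj
    have hhead := hasWalk_of_chain f hf (Nat.zero_le a) (hab.trans hbk).le
    have htail := hasWalk_of_chain f hf hbk.le le_rfl
    have hloop := hasWalk_of_chain f hf hab.le hbk.le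
    rw [Nat.sub_zero, hf0] at hhead
    rw [← heq, hfk] at htail
    rw [← heq] at hloop
    exact ⟨a + (k - b), b - a, f a, by omega, by omega, by omega, hhead.trans htail, hloop⟩

theorem HasWalk.mem_closure_cycleLengths {k : ℕ} {u : V} (h : HasWalk D k u u) :
    k ∈ AddSubmonoid.closure (cycleLengths D) := by
  induction k using Nat.strong_induction_on generalizing u with
  | _ k ih =>
  rcases Nat.eq_zero_or_pos k with rfl | hk
  · exact zero_mem _
  rcases h.mem_cycleLengths_or_split hk with hcyc | ⟨i, j, w, hi, hj, rfl, hu, hw⟩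
  · exact AddSubmonoid.subset_closure hcyc
  · exact add_mem (ih i (by omega) hu) (ih j (by omega) hw)

theorem HasWalk.exists_mem_cycleLengths {k : ℕ} {u : V} (h : HasWalk D k u u) (hk : 0 < k) :
    ∃ ℓ ∈ cycleLengths D, HasWalk D ℓ u u := by
  induction k using Nat.strong_induction_on with
  | _ k ih =>
  rcases h.mem_cycleLengths_or_split hk with hcyc | ⟨i, j, w, hi, hj, rfl, hu, -⟩
  · exact ⟨k, hcyc, h⟩
  · exact ih i (by omega) hu hi

theorem HasCycleOfLength.exists_finset_hasWalk {ℓ : ℕ} (h : HasCycleOfLength D ℓ) :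
    ∃ S : Finset V, S.card = ℓ ∧ ∀ y ∈ S, HasWalk D ℓ y y := by
  classical
  obtain ⟨hℓ, f, hinj, hf, hlast⟩ := h
  have hchain : ∀ t < ℓ - 1, D (f t) (f (t + 1)) := fun t ht => hf t (by omega)
  refine ⟨(Finset.range ℓ).image f, ?_, ?_⟩
  · rw [Finset.card_image_of_injOn
      (fun a ha b hb => hinj a (Finset.mem_range.mp ha) b (Finset.mem_range.mp hb)),
      Finset.card_range]
  · simp only [Finset.mem_image, Finset.mem_range, forall_exists_index, and_imp]
    rintro _ t ht rfl
    -- go round the cycle from `f t` to `f (ℓ - 1)`, back to `f 0`, and on to `f t`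
    have hwalk := (hasWalk_of_chain f hchain (Nat.le_sub_one_of_lt ht) le_rfl).trans
      ((HasWalk.single_s7 hlast).trans (hasWalk_of_chain f hchain (Nat.zero_le t) (by omega)))
    rwa [show ℓ - 1 - t + (1 + (t - 0)) = ℓ by omega] at hwalk

theorem exists_hasWalk_add_card_le [Fintype V] (S : Finset V) {k : ℕ} {u y : V} (hy : y ∈ S)
    (h : HasWalk D k u y) :
    ∃ p, ∃ y' ∈ S, HasWalk D p u y' ∧ p + S.card ≤ Fintype.card V := by
  classical
  have hex : ∃ p, ∃ y' ∈ S, HasWalk D p u y' := ⟨k, y, hy, h⟩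
  obtain ⟨y', hy', hp⟩ := Nat.find_spec hex
  set p := Nat.find hex
  refine ⟨p, y', hy', hp, ?_⟩
  obtain ⟨f, hf0, hfp, hf⟩ := hasWalk_iff_exists_fun.mp hp
  -- by minimality of `p`, the walk meets `S` only at its end and repeats no vertex
  have hout : ∀ i < p, f i ∉ S := fun i hi hiS => Nat.find_min hex hi
    ⟨f i, hiS, by simpa [hf0] using hasWalk_of_chain f hf (Nat.zero_le i) hi.le⟩
  have hinj : ∀ i < p, ∀ j < p, f i = f j → i = j := by
    by_contra hrep
    obtain ⟨a, b, hab, hbp, heq⟩ := exists_lt_of_not_injOn hrep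
    have hhead := hasWalk_of_chain f hf (Nat.zero_le a) (hab.trans hbp).le
    have htail := hasWalk_of_chain f hf hbp.le le_rfl
    rw [Nat.sub_zero, hf0] at hhead
    rw [← heq, hfp] at htail
    exact Nat.find_min hex (show a + (p - b) < p by omega) ⟨y', hy', hhead.trans htail⟩
  have hdisj : Disjoint ((Finset.range p).image f) S := by
    simpa [Finset.disjoint_left] using hout
  calc p + S.card = ((Finset.range p).image f ∪ S).card := by
        rw [Finset.card_union_of_disjoint hdisj, Finset.card_image_of_injOn
          (fun a ha b hb => hinj a (Finset.mem_range.mp ha) b (Finset.mem_range.mp hb)),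
          Finset.card_range]
    _ ≤ Fintype.card V := Finset.card_le_univ _

theorem exists_hasWalk_lt_card [Fintype V] {k : ℕ} {u v : V} (h : HasWalk D k u v) :
    ∃ p < Fintype.card V, HasWalk D p u v := by
  obtain ⟨p, v', hv', hp, hcard⟩ :=
    exists_hasWalk_add_card_le {v} (Finset.mem_singleton_self v) h
  rw [Finset.mem_singleton.mp hv'] at hp
  exact ⟨p, by simpa using hcard, hp⟩

theorem HasWalk.add_of_mem_closure_pair {p c c' N : ℕ} {u y : V} (h : HasWalk D p u y)
    (hu : HasWalk D c u u) (hy : HasWalk D c' y y)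
    (hN : N ∈ AddSubmonoid.closure ({c, c'} : Set ℕ)) : HasWalk D (N + p) u y := by
  obtain ⟨a, b, rfl⟩ := (AddSubmonoid.mem_closure_pair c c' N).mp hN
  have hwalk := (hu.iterate a).trans (h.trans (hy.iterate b))
  rwa [show a * c + (p + b * c') = a • c + b • c' + p by simp only [smul_eq_mul]; ring] at hwalk

theorem mem_closure_pair_of_coprime {g q N : ℕ} (hgq : Nat.Coprime g q)
    (hN : (g - 1) * (q - 1) ≤ N) : N ∈ AddSubmonoid.closure ({g, q} : Set ℕ) := by
  obtain ⟨a, b, h⟩ := Nat.exists_add_mul_eq_of_gcd_dvd_of_mul_pred_le g q N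
    (by simp [hgq.gcd_eq_one]) (by simpa using hN)
  exact (AddSubmonoid.mem_closure_pair g q N).mpr ⟨a, b, by simpa using h⟩

theorem IsPrimitive.exists_mem_cycleLengths (hD : IsPrimitive D) (u : V) :
    ∃ ℓ ∈ cycleLengths D, HasWalk D ℓ u u :=
  let ⟨_, hK, hall⟩ := hD
  (hall u u).exists_mem_cycleLengths hK

/-- The closed walks of lengths `K` and `K + 1` at any vertex force the cycle lengths to be
coprime. -/
theorem IsPrimitive.setGcd_cycleLengths [Nonempty V] (hD : IsPrimitive D) :
    Nat.setGcd (cycleLengths D) = 1 := by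
  obtain ⟨K, hK, hall⟩ := hD
  obtain ⟨u⟩ := ‹Nonempty V›
  obtain ⟨K', rfl⟩ : ∃ K', K = K' + 1 := ⟨K - 1, by omega⟩
  obtain ⟨w, huw, -⟩ := hall u u
  have hK := Nat.setGcd_dvd_of_mem_closure (hall u u).mem_closure_cycleLengths
  have hK1 := Nat.setGcd_dvd_of_mem_closure
    ((HasWalk.single_s7 huw).trans (hall w u)).mem_closure_cycleLengths
  exact Nat.dvd_one.mp ((Nat.dvd_add_left hK).mp hK1)

theorem IsPrimitive.coprime_of_cycleLengths_eq_pair [Nonempty V] (hD : IsPrimitive D) {g q : ℕ}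
    (hC : cycleLengths D = {g, q}) : Nat.Coprime g q := by
  have hdvd : Nat.gcd g q ∣ Nat.setGcd {g, q} :=
    Nat.dvd_setGcd_iff.mpr (by simp [Nat.gcd_dvd_left, Nat.gcd_dvd_right])
  rwa [← hC, hD.setGcd_cycleLengths, Nat.dvd_one] at hdvd

theorem IsPrimitive.hasWalk_of_cycleLengths_eq_pair [Fintype V] (hD : IsPrimitive D) {g q : ℕ}
    (hC : cycleLengths D = {g, q}) (hgq : g ≤ q) (u v : V) {N : ℕ}
    (hN : (g - 1) * (q - 1) + (Fintype.card V - g) + (Fintype.card V - 1) ≤ N) :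
    HasWalk D N u v := by
  have : Nonempty V := ⟨u⟩
  obtain ⟨c, hc, hu⟩ := hD.exists_mem_cycleLengths u
  obtain ⟨K, -, hall⟩ := id hD
  obtain ⟨c', hpair, hgc'⟩ : ∃ c', ({c, c'} : Set ℕ) = {g, q} ∧ g ≤ c' := by
    rcases hC ▸ hc with rfl | rfl
    exacts [⟨q, rfl, hgq⟩, ⟨g, Set.pair_comm _ _, le_rfl⟩]
  have hc' : c' ∈ cycleLengths D := hC ▸ hpair ▸ Set.mem_insert_of_mem c rfl
  obtain ⟨S, hS, hSy⟩ := HasCycleOfLength.exists_finset_hasWalk hc'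
  obtain ⟨y, hy⟩ : S.Nonempty := Finset.card_pos.mp (hS ▸ hc'.1)
  obtain ⟨p₁, y', hy', h₁, hp₁⟩ := exists_hasWalk_add_card_le S hy (hall u y)
  obtain ⟨p₂, hp₂, h₂⟩ := exists_hasWalk_lt_card (hall y' v)
  have hM : N - p₁ - p₂ ∈ AddSubmonoid.closure ({c, c'} : Set ℕ) :=
    hpair ▸ mem_closure_pair_of_coprime (hD.coprime_of_cycleLengths_eq_pair hC) (by omega)
  have hwalk := (h₁.add_of_mem_closure_pair hu (hSy y' hy') hM).trans h₂
  rwa [show N - p₁ - p₂ + p₁ + p₂ = N by omega] at hwalk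

end

theorem stmt7_general {V : Type*} [Fintype V] (n g q : ℕ) (hn : Fintype.card V = n)
    (D : V → V → Prop) (hD : IsPrimitive D)
    (hC : cycleLengths D = {g, q}) (hgq : g < q) (hq : q ≤ n - 1) :
    (expnt D : ℤ) ≤ 2 * (n : ℤ) - 2 + ((g : ℤ) - 1) * ((n : ℤ) - 3) := by
  have hg : 1 ≤ g := (hC.symm ▸ Set.mem_insert g {q} : g ∈ cycleLengths D).1
  have hbound : (g - 1) * (q - 1) + (n - g) + (n - 1) ≤ 2 * n - 2 + (g - 1) * (n - 3) := by
    have := Nat.mul_le_mul_left (g - 1) (show q - 1 ≤ n - 3 + 1 by omega)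
    rw [Nat.mul_succ] at this
    omega
  have hexp : expnt D ≤ 2 * n - 2 + (g - 1) * (n - 3) := Nat.sInf_le
    ⟨by omega, fun u v => hD.hasWalk_of_cycleLengths_eq_pair hC hgq.le u v (hn ▸ hbound)⟩
  zify [hg, show 3 ≤ n by omega, show 2 ≤ 2 * n by omega] at hexp
  exact hexp

/-- a primitive digraph of order `n ≥ 6` with cycle length set
exactly `{g, q}`, `1 ≤ g < q ≤ n - 1`, has `exp(D) ≤ 2n - 2 + (g-1)(n-3)`. -/
theorem stmt7 {V : Type*} [Fintype V] (n g q : ℕ) (hn : Fintype.card V = n)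
    (h6 : 6 ≤ n) (D : V → V → Prop) (hD : IsPrimitive D)
    (hC : cycleLengths D = {g, q}) (hg1 : 1 ≤ g) (hgq : g < q) (hq : q ≤ n - 1) :
    (expnt D : ℤ) ≤ 2 * (n : ℤ) - 2 + ((g : ℤ) - 1) * ((n : ℤ) - 3) :=
  stmt7_general n g q hn D hD hC hgq hq
end

section
/- Let n and g be coprime positive integers with n ≥ 2g and g ≥ 1, and let k be an integer with k ≥ g + 1 and g + k − 1 ≤ n. Let H be the digraph on vertices v_1, …, v_n consisting of the n-cycle with arcs v_i → v_{i+1} for 1 ≤ i ≤ n−1 and v_n → v_1, together with the two extra arcs v_g → v_1 and v_{k+g−1} → v_k (so H contains two vertex-disjoint cycles of length g). Then H is primitive and exp(H) ≤ (n−1)g + n − 2g. -/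
variable {V : Type*}

/-- The digraph `H` on `Fin n` (vertex `v_i` is index `i - 1`): the `n`-cycle
`v_1 → v_2 → ⋯ → v_n → v_1` together with the two extra arcs `v_g → v_1` and
`v_{k+g-1} → v_k`, creating two vertex-disjoint `g`-cycles. -/
def Hgraph (n g k : ℕ) : Fin n → Fin n → Prop :=
  fun a b => ((b : ℕ) = (a : ℕ) + 1 ∨ ((a : ℕ) = n - 1 ∧ (b : ℕ) = 0))
    ∨ ((a : ℕ) = g - 1 ∧ (b : ℕ) = 0)
    ∨ ((a : ℕ) = k + g - 2 ∧ (b : ℕ) = k - 1)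

/-!
Every vertex of `H` reaches, within `n - 2g` steps, a vertex lying on one of the two `g`-cycles.
At that vertex there are closed walks of the coprime lengths `n` and `g`, so by the Chicken
McNugget theorem closed walks of every length `≥ (n - 1)(g - 1)`; finally at most `n - 1` steps
along the `n`-cycle reach any target vertex.
-/

theorem Nat.exists_mul_add_mul_eq_of_coprime {p q m : ℕ} (hco : p.Coprime q)
    (hm : (p - 1) * (q - 1) ≤ m) : ∃ a b : ℕ, a * p + b * q = m := by
  rcases Nat.lt_or_ge 1 p with hp | hp
  · rcases Nat.lt_or_ge 1 q with hq | hq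
    · by_contra hne
      have hm' : m ∉ AddSubmonoid.closure ({p, q} : Set ℕ) := by
        simpa [AddSubmonoid.mem_closure_pair, smul_eq_mul] using hne
      have hle := (frobeniusNumber_pair hco hp hq).2 hm'
      rw [Nat.sub_one_mul, Nat.mul_sub_one] at hm
      have hpq : p + q ≤ p * q := by nlinarith
      omega
    · interval_cases q
      · exact absurd ((Nat.coprime_zero_right p).1 hco) hp.ne'
      · exact ⟨0, m, by simp⟩
  · interval_cases p
    · exact ⟨0, m, by simp [(Nat.coprime_zero_left q).1 hco]⟩
    · exact ⟨m, 0, by simp⟩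

section Walks

variable {D : V → V → Prop}

theorem HasWalk.append_s10 {a b : ℕ} {u w v : V} (huw : HasWalk D a u w) (hwv : HasWalk D b w v) :
    HasWalk D (a + b) u v := by
  induction a generalizing u with
  | zero =>
    cases huw
    simpa using hwv
  | succ a ih =>
    obtain ⟨x, hux, hxw⟩ := huw
    rw [Nat.succ_add]
    exact ⟨x, hux, ih hxw⟩

theorem HasWalk.mul_self {L : ℕ} {w : V} (hw : HasWalk D L w w) (t : ℕ) :
    HasWalk D (t * L) w w := by
  induction t with
  | zero => rw [Nat.zero_mul]; rfl
  | succ t ih => rw [Nat.succ_mul]; exact ih.append_s10 hw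

theorem HasWalk.self_of_coprime {p q m : ℕ} {w : V} (hp : HasWalk D p w w) (hq : HasWalk D q w w)
    (hco : p.Coprime q) (hm : (p - 1) * (q - 1) ≤ m) : HasWalk D m w w := by
  obtain ⟨a, b, rfl⟩ := Nat.exists_mul_add_mul_eq_of_coprime hco hm
  exact (hp.mul_self a).append_s10 (hq.mul_self b)

theorem isPrimitive_and_expnt_le {K : ℕ} (hK : 1 ≤ K) (hwalk : ∀ u v, HasWalk D K u v) :
    IsPrimitive D ∧ expnt D ≤ K :=
  ⟨⟨K, hK, hwalk⟩, Nat.sInf_le ⟨hK, hwalk⟩⟩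

end Walks

section CycleDigraph

variable {n : ℕ} {D : Fin n → Fin n → Prop}
  (hcyc : ∀ u v : Fin n, ((u : ℕ) + 1) % n = v → D u v)
include hcyc

theorem hasWalk_of_add_mod {m : ℕ} {u v : Fin n} (h : ((u : ℕ) + m) % n = v) :
    HasWalk D m u v := by
  induction m generalizing u with
  | zero =>
    rw [Nat.add_zero, Nat.mod_eq_of_lt u.isLt] at h
    exact Fin.ext h
  | succ m ih =>
    have hn : 0 < n := u.pos
    refine ⟨⟨(u + 1) % n, Nat.mod_lt _ hn⟩, hcyc _ _ rfl, ih ?_⟩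
    rw [Nat.mod_add_mod, ← h]
    ring_nf

theorem hasWalk_of_le {u v : Fin n} (h : u ≤ v) : HasWalk D (v - u) u v :=
  hasWalk_of_add_mod hcyc (by rw [Nat.add_sub_cancel' h]; exact Nat.mod_eq_of_lt v.isLt)

theorem hasWalk_self_of_arc {a b u : Fin n} (hba : D b a) (hau : a ≤ u) (hub : u ≤ b) :
    HasWalk D (b - a + 1) u u := by
  have h := (hasWalk_of_le hcyc hub).append_s10
    ((show HasWalk D 1 b a from ⟨a, hba, rfl⟩).append_s10 (hasWalk_of_le hcyc hau))
  rwa [show (b : ℕ) - u + (1 + (u - a)) = b - a + 1 by omega] at h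

theorem hasWalk_of_coprime_closed_walk {g d m : ℕ} {u w : Fin n} (huw : HasWalk D d u w)
    (hw : HasWalk D g w w) (hg : 0 < g) (hco : n.Coprime g) (hm : d + (n - 1) * g ≤ m)
    (v : Fin n) : HasWalk D m u v := by
  have hn : 0 < n := u.pos
  set e := ((v : ℕ) + n - w) % n with he
  have hwv : HasWalk D e w v :=
    hasWalk_of_add_mod hcyc (by
      rw [he, Nat.add_mod_mod, show (w : ℕ) + (v + n - w) = v + n by omega, Nat.add_mod_right,
        Nat.mod_eq_of_lt v.isLt])
  have he_lt : e < n := Nat.mod_lt _ hn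
  have hng : n - 1 ≤ (n - 1) * g := Nat.le_mul_of_pos_right _ hg
  have hwn : HasWalk D n w w := hasWalk_of_add_mod hcyc (by simp [Nat.mod_eq_of_lt w.isLt])
  have hloop : HasWalk D (m - d - e) w w := by
    refine hwn.self_of_coprime hw hco ?_
    rw [Nat.mul_sub_one]
    omega
  have h := huw.append_s10 (hloop.append_s10 hwv)
  rwa [show d + (m - d - e + e) = m by omega] at h

end CycleDigraph

namespace Hgraph

variable {n g k : ℕ}

theorem adj_of_succ_mod (u v : Fin n) (h : ((u : ℕ) + 1) % n = v) : Hgraph n g k u v := by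
  left
  rcases Nat.lt_or_ge (u + 1) n with hlt | hge
  · left
    rw [← h, Nat.mod_eq_of_lt hlt]
  · right
    have hu : (u : ℕ) + 1 = n := by omega
    rw [hu, Nat.mod_self] at h
    omega

theorem exists_hasWalk_to_short_cycle (hg : 1 ≤ g) (hk : g + 1 ≤ k) (hkg : g + k - 1 ≤ n)
    (u : Fin n) :
    ∃ d ≤ n - 2 * g, ∃ w, HasWalk (Hgraph n g k) d u w ∧ HasWalk (Hgraph n g k) g w w := by
  have hcyc := adj_of_succ_mod (n := n) (g := g) (k := k)
  -- the two `g`-cycles are the vertex intervals `[0, g - 1]` and `[k - 1, k + g - 2]`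
  let a₁ : Fin n := ⟨0, by omega⟩
  let b₁ : Fin n := ⟨g - 1, by omega⟩
  let a₂ : Fin n := ⟨k - 1, by omega⟩
  let b₂ : Fin n := ⟨k + g - 2, by omega⟩
  have hloop₁ : ∀ w : Fin n, (w : ℕ) < g → HasWalk (Hgraph n g k) g w w := fun w hw => by
    have h := hasWalk_self_of_arc hcyc (a := a₁) (b := b₁) (Or.inr (Or.inl ⟨rfl, rfl⟩))
      (Nat.zero_le _) (show (w : ℕ) ≤ g - 1 by omega)
    rwa [show (g - 1 - 0 + 1) = g by omega] at h
  have hloop₂ : ∀ w : Fin n, k - 1 ≤ (w : ℕ) → (w : ℕ) ≤ k + g - 2 →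
      HasWalk (Hgraph n g k) g w w := fun w hw₁ hw₂ => by
    have h := hasWalk_self_of_arc hcyc (a := a₂) (b := b₂) (Or.inr (Or.inr ⟨rfl, rfl⟩)) hw₁ hw₂
    rwa [show (k + g - 2 - (k - 1) + 1) = g by omega] at h
  rcases Nat.lt_or_ge u g with hu₁ | hu₁
  · exact ⟨0, Nat.zero_le _, u, rfl, hloop₁ u hu₁⟩
  rcases Nat.lt_or_ge u (k - 1) with hu₂ | hu₂
  · exact ⟨_, by simp only [a₂]; omega, a₂, hasWalk_of_le hcyc hu₂.le, hloop₂ a₂ le_rfl (by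
      simp only [a₂]; omega)⟩
  rcases Nat.lt_or_ge u (k + g - 1) with hu₃ | hu₃
  · exact ⟨0, Nat.zero_le _, u, rfl, hloop₂ u hu₂ (by omega)⟩
  · refine ⟨n - u, by omega, a₁, hasWalk_of_add_mod hcyc ?_, hloop₁ a₁ (by simp only [a₁]; omega)⟩
    rw [Nat.add_sub_cancel' u.isLt.le, Nat.mod_self]

end Hgraph

/-- for coprime `n, g` with `n ≥ 2g`, `g ≥ 1`, and `g + 1 ≤ k`,
`g + k - 1 ≤ n`, the digraph `H` is primitive and `exp(H) ≤ (n-1)g + n - 2g`. -/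
theorem stmt10 (n g k : ℕ) (hg : 1 ≤ g) (hn : 2 * g ≤ n) (hco : Nat.Coprime n g)
    (hk : g + 1 ≤ k) (hkg : g + k - 1 ≤ n) :
    IsPrimitive (Hgraph n g k) ∧
      (expnt (Hgraph n g k) : ℤ) ≤ ((n : ℤ) - 1) * g + n - 2 * g := by
  have hwalk : ∀ u v, HasWalk (Hgraph n g k) ((n - 1) * g + (n - 2 * g)) u v := fun u v => by
    obtain ⟨d, hd, w, huw, hw⟩ := Hgraph.exists_hasWalk_to_short_cycle hg hk hkg u
    exact hasWalk_of_coprime_closed_walk Hgraph.adj_of_succ_mod huw hw hg hco (by omega) v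
  have hK : 1 ≤ (n - 1) * g + (n - 2 * g) :=
    le_add_right (Nat.one_le_iff_ne_zero.2 (Nat.mul_ne_zero (by omega) (by omega)))
  obtain ⟨hprim, hexp⟩ := isPrimitive_and_expnt_le hK hwalk
  refine ⟨hprim, ?_⟩
  calc (expnt (Hgraph n g k) : ℤ) ≤ (((n - 1) * g + (n - 2 * g) : ℕ) : ℤ) := by
        exact_mod_cast hexp
    _ = ((n : ℤ) - 1) * g + n - 2 * g := by
      push_cast [Nat.cast_sub (show 1 ≤ n by omega), Nat.cast_sub hn]
      ring
end
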